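/- For every d-degenerate graph G, χ_i(G) ≤ ch_i(G) ≤ Δ(G) + 2d − 1. -/

import Mathlib

open SimpleGraph

variable {V : Type*}

/-- An incidence of a graph `G`: a pair `(v, e)` where `e` is an edge of `G` and `v ∈ e`. -/
def Inc (G : SimpleGraph V) : Type _ :=
  {p : V × Sym2 V // p.2 ∈ G.edgeSet ∧ p.1 ∈ p.2}

/-- The incidence graph `I_G` of `G`: vertices are incidences of `G`, with `(v,e)` and `(w,f)`
adjacent whenever they are distinct and `v = w`, or `e = f`, or the pair `vw` equals `e` or `f`. -/
def incGraph (G : SimpleGraph V) : SimpleGraph (Inc G) where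
  Adj a b := a ≠ b ∧ (a.1.1 = b.1.1 ∨ a.1.2 = b.1.2 ∨
      s(a.1.1, b.1.1) = a.1.2 ∨ s(a.1.1, b.1.1) = b.1.2)
  symm := ⟨by
    rintro a b ⟨hab, h⟩
    refine ⟨hab.symm, ?_⟩
    rw [Sym2.eq_swap (a := b.1.1) (b := a.1.1)]
    rcases h with h | h | h | h
    · exact Or.inl h.symm
    · exact Or.inr (Or.inl h.symm)
    · exact Or.inr (Or.inr (Or.inr h))
    · exact Or.inr (Or.inr (Or.inl h))⟩
  loopless := ⟨fun _ h => h.1 rfl⟩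

/-- `G` admits an incidence `p`-colouring. -/
def IncColorable (G : SimpleGraph V) (p : ℕ) : Prop :=
  (incGraph G).Colorable p

/-- `G` is incidence `k`-choosable. -/
def IncChoosable (G : SimpleGraph V) (k : ℕ) : Prop :=
  ∀ L : Inc G → Finset ℕ, (∀ i, (L i).card = k) →
    ∃ c : Inc G → ℕ, (∀ i, c i ∈ L i) ∧ ∀ i j, (incGraph G).Adj i j → c i ≠ c j

/-- The incidence chromatic number `χᵢ(G)`. -/
noncomputable def incChromaticNumber (G : SimpleGraph V) : ℕ :=
  sInf {p | IncColorable G p}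

/-- The incidence choice number `chᵢ(G)`. -/
noncomputable def incChoiceNumber (G : SimpleGraph V) : ℕ :=
  sInf {k | IncChoosable G k}

/-- The maximum degree `Δ(G)` of a finite graph. -/
noncomputable def maxDeg [Fintype V] (G : SimpleGraph V) : ℕ :=
  Finset.univ.sup fun v => (G.neighborSet v).ncard

/-- A graph is `d`-degenerate if every (finite, nonempty) subgraph has a vertex of degree
at most `d` within it. -/
def Degen {W : Type*} (H : SimpleGraph W) (d : ℕ) : Prop :=
  ∀ s : Set W, s.Finite → s.Nonempty → ∃ v ∈ s, (s ∩ H.neighborSet v).ncard ≤ d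

/-!
Take a degeneracy ordering `r` of `G`, in which every vertex has at most `d` neighbours of lower
rank, and order the incidences `(v, vw)` lexicographically by `(r v, r w)`. Every incidence is
adjacent to at most `Δ + 2d - 2` incidences below it, so the incidence graph is
`(Δ + 2d - 2)`-degenerate and greedy list colouring along the order works with lists of size
`Δ + 2d - 1`. Colourings from the lists `{0, …, p - 1}` are ordinary colourings, so `χᵢ ≤ chᵢ`.
-/

def SimpleGraph.lowerNeighborSet {W α : Type*} [LT α] (H : SimpleGraph W) (r : W → α) (v : W) :
    Set W :=
  {u | H.Adj v u ∧ r u < r v}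

section Degeneracy

variable {W : Type*} {H : SimpleGraph W} {d : ℕ}

theorem Degen.induction [Finite W] (hH : Degen H d) {P : Set W → Prop} (empty : P ∅)
    (step : ∀ s v, v ∈ s → (s ∩ H.neighborSet v).ncard ≤ d → P (s \ {v}) → P s) (s : Set W) :
    P s := by
  induction s using WellFoundedLT.induction with
  | _ s ih =>
    rcases s.eq_empty_or_nonempty with rfl | hne
    · exact empty
    obtain ⟨v, hv, hdeg⟩ := hH s s.toFinite hne
    exact step s v hv hdeg (ih _ (Set.sdiff_singleton_ssubset.2 hv))

theorem Degen.one_le_of_adj (hH : Degen H d) {a b : W} (hab : H.Adj a b) : 1 ≤ d := by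
  obtain ⟨x, hx, hdeg⟩ := hH {a, b} (Set.toFinite _) (Set.insert_nonempty a {b})
  refine le_trans ((Set.ncard_pos (Set.toFinite _)).2 ?_) hdeg
  rcases hx with rfl | rfl
  · exact ⟨b, by simp [hab]⟩
  · exact ⟨a, by simp [hab.symm]⟩

theorem Degen.exists_listColoring [Finite W] (hH : Degen H d) (L : W → Finset ℕ)
    (hL : ∀ v, d < (L v).card) :
    ∃ c : W → ℕ, (∀ v, c v ∈ L v) ∧ ∀ u v, H.Adj u v → c u ≠ c v := by
  classical
  suffices ∀ s : Set W, ∃ c : W → ℕ, (∀ v ∈ s, c v ∈ L v) ∧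
      ∀ u ∈ s, ∀ v ∈ s, H.Adj u v → c u ≠ c v by
    obtain ⟨c, hcL, hc⟩ := this Set.univ
    exact ⟨c, fun v => hcL v trivial, fun u v => hc u trivial v trivial⟩
  refine hH.induction ⟨fun _ => 0, by simp, by simp⟩ ?_
  rintro s v hv hdeg ⟨c, hcL, hc⟩
  obtain ⟨col, hcol, hfree⟩ : ∃ col ∈ (L v : Set ℕ), col ∉ c '' (s ∩ H.neighborSet v) := by
    refine Set.exists_mem_notMem_of_ncard_lt_ncard ?_
    calc (c '' (s ∩ H.neighborSet v)).ncard ≤ (s ∩ H.neighborSet v).ncard := Set.ncard_image_le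
      _ < (L v : Set ℕ).ncard := by rw [Set.ncard_coe_finset]; exact hdeg.trans_lt (hL v)
  have hnew : ∀ u ∈ s, H.Adj v u → col ≠ c u := fun u hu hvu hcu =>
    hfree ⟨u, ⟨hu, hvu⟩, hcu.symm⟩
  refine ⟨Function.update c v col, fun u hu => ?_, fun u hu u' hu' hadj => ?_⟩
  · rcases eq_or_ne u v with rfl | huv
    · simpa using hcol
    · simpa [huv] using hcL u ⟨hu, huv⟩
  · by_cases huv : u = v <;> by_cases hu'v : u' = v
    · exact absurd (huv.trans hu'v.symm) hadj.ne
    · subst huv; simpa [hu'v] using hnew u' hu' hadj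
    · subst hu'v; simpa [huv] using (hnew u hu hadj.symm).symm
    · simpa [huv, hu'v] using hc u ⟨hu, huv⟩ u' ⟨hu', hu'v⟩ hadj

theorem Degen.exists_rank [Finite W] (hH : Degen H d) :
    ∃ r : W → ℕ, Function.Injective r ∧ ∀ v, (H.lowerNeighborSet r v).ncard ≤ d := by
  classical
  suffices ∀ s : Set W, ∃ r : W → ℕ, (∀ v ∈ s, r v < s.ncard) ∧ Set.InjOn r s ∧
      ∀ v ∈ s, (s ∩ H.lowerNeighborSet r v).ncard ≤ d by
    obtain ⟨r, -, hinj, hdeg⟩ := this Set.univ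
    exact ⟨r, Set.injOn_univ.1 hinj, fun v => by simpa using hdeg v trivial⟩
  refine hH.induction ⟨fun _ => 0, by simp, by simp, by simp⟩ ?_
  rintro s v hv hdeg ⟨r, hlt, hinj, hlow⟩
  have hcard : (s \ {v}).ncard + 1 = s.ncard := Set.ncard_sdiff_singleton_add_one hv
  set r' := Function.update r v (s \ {v}).ncard
  have hr'v : r' v = (s \ {v}).ncard := Function.update_self ..
  have hr' : ∀ u, u ≠ v → r' u = r u := fun u hu => Function.update_of_ne hu ..
  have hbelow : ∀ u ∈ s, u ≠ v → r' u < r' v := fun u hu huv => by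
    rw [hr' u huv, hr'v]
    exact hlt u ⟨hu, huv⟩
  refine ⟨r', fun u hu => ?_, fun a ha b hb hab => ?_, fun u hu => ?_⟩
  · rcases eq_or_ne u v with rfl | huv
    · omega
    · have := hbelow u hu huv
      omega
  · by_cases hav : a = v <;> by_cases hbv : b = v
    · exact hav.trans hbv.symm
    · exact absurd hab (hav ▸ (hbelow b hb hbv).ne')
    · exact absurd hab (hbv ▸ (hbelow a ha hav).ne)
    · rw [hr' a hav, hr' b hbv] at hab
      exact hinj ⟨ha, hav⟩ ⟨hb, hbv⟩ hab
  · rcases eq_or_ne u v with rfl | huv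
    · exact (Set.ncard_le_ncard (Set.inter_subset_inter_right s fun x hx => hx.1)).trans hdeg
    refine (Set.ncard_le_ncard ?_).trans (hlow u ⟨hu, huv⟩)
    rintro x ⟨hx, hux, hxu⟩
    have hxv : x ≠ v := by
      rintro rfl
      exact (hbelow u hu huv).not_gt hxu
    rw [hr' x hxv, hr' u huv] at hxu
    exact ⟨⟨hx, hxv⟩, hux, hxu⟩

theorem Degen.of_injective_rank [Finite W] {α : Type*} [LinearOrder α] {r : W → α}
    (hr : Function.Injective r) (hlow : ∀ v, (H.lowerNeighborSet r v).ncard ≤ d) : Degen H d := by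
  intro s hs hne
  obtain ⟨v, hv, hmax⟩ := Set.exists_max_image s r hs hne
  have hsub : s ∩ H.neighborSet v ⊆ H.lowerNeighborSet r v := fun u hu =>
    ⟨hu.2, (hmax u hu.1).lt_of_ne (hr.ne (H.ne_of_adj hu.2).symm)⟩
  exact ⟨v, hv, (Set.ncard_le_ncard hsub).trans (hlow v)⟩

end Degeneracy

namespace Inc

variable {G : SimpleGraph V}

instance [Finite V] : Finite (Inc G) :=
  inferInstanceAs (Finite {p : V × Sym2 V // p.2 ∈ G.edgeSet ∧ p.1 ∈ p.2})

noncomputable def other (J : Inc G) : V :=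
  Sym2.Mem.other J.2.2

theorem snd_eq (J : Inc G) : J.1.2 = s(J.1.1, J.other) :=
  (Sym2.other_spec J.2.2).symm

theorem adj (J : Inc G) : G.Adj J.1.1 J.other := by
  have := J.2.1
  rwa [snd_eq] at this

theorem ext' {J J' : Inc G} (h : J.1.1 = J'.1.1) (h' : J.other = J'.other) : J = J' :=
  Subtype.ext (Prod.ext h (by rw [snd_eq, snd_eq, h, h']))

theorem eq_or_eq_or_other_eq_of_adj {I J : Inc G} (h : (incGraph G).Adj I J) :
    J.1.1 = I.1.1 ∨ J.1.1 = I.other ∨ J.other = I.1.1 := by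
  obtain ⟨-, h | h | h | h⟩ := h
  · exact Or.inl h.symm
  · have := J.2.2
    rw [← h, snd_eq, Sym2.mem_iff] at this
    tauto
  · rw [snd_eq, Sym2.eq_iff] at h
    tauto
  · rw [snd_eq, Sym2.eq_iff] at h
    tauto

noncomputable def key (r : V → ℕ) (J : Inc G) : ℕ ×ₗ ℕ :=
  toLex (r J.1.1, r J.other)

theorem key_injective {r : V → ℕ} (hr : Function.Injective r) :
    Function.Injective (key (G := G) r) := fun J J' h => by
  simp only [key, toLex_inj, Prod.mk.injEq] at h
  exact ext' (hr h.1) (hr h.2)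

theorem ncard_setOf_fst_eq_le [Finite V] (v : V) (T : Set V) :
    {J : Inc G | J.1.1 = v ∧ J.other ∈ T}.ncard ≤ (G.neighborSet v ∩ T).ncard :=
  Set.ncard_le_ncard_of_injOn other (fun J hJ => ⟨hJ.1 ▸ J.adj, hJ.2⟩)
    fun _ hJ _ hJ' h => ext' (hJ.1.trans hJ'.1.symm) h

theorem ncard_setOf_other_eq_le [Finite V] (v : V) (T : Set V) :
    {J : Inc G | J.other = v ∧ J.1.1 ∈ T}.ncard ≤ T.ncard :=
  Set.ncard_le_ncard_of_injOn (fun J => J.1.1) (fun _ hJ => hJ.2)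
    fun _ hJ _ hJ' h => ext' h (hJ.1.trans hJ'.1.symm)

theorem lowerNeighborSet_key_subset {r : V → ℕ} (hr : Function.Injective r) (I : Inc G) :
    (incGraph G).lowerNeighborSet (key r) I ⊆
      {J | J.1.1 = I.1.1 ∧ r J.other < r I.other} ∪ {J | J.1.1 = I.other ∧ r I.other < r I.1.1} ∪
        {J | J.other = I.1.1 ∧ J.1.1 ∈ G.lowerNeighborSet r I.1.1 \ {I.other}} := by
  rintro J ⟨hadj, hlt⟩
  simp only [key, Prod.Lex.toLex_lt_toLex] at hlt
  by_cases hw : J.1.1 = I.other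
  · refine Or.inl (Or.inr ⟨hw, ?_⟩)
    rw [hw] at hlt
    rcases hlt with hlt | ⟨heq, -⟩
    · exact hlt
    · exact absurd (hr heq) I.adj.ne'
  rcases eq_or_eq_or_other_eq_of_adj hadj with hv | hw' | ho
  · rw [hv] at hlt
    exact Or.inl (Or.inl ⟨hv, by simpa using hlt⟩)
  · exact absurd hw' hw
  · refine Or.inr ⟨ho, ⟨?_, ?_⟩, hw⟩
    · have := J.adj.symm
      rwa [ho] at this
    · rcases hlt with hlt | ⟨heq, -⟩
      · exact hlt
      · exact absurd ((hr heq).trans ho.symm) J.adj.ne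

end Inc

theorem ncard_neighborSet_le_maxDeg [Fintype V] (G : SimpleGraph V) (v : V) :
    (G.neighborSet v).ncard ≤ maxDeg G :=
  Finset.le_sup (f := fun v => (G.neighborSet v).ncard) (Finset.mem_univ v)

/-- If `vw` goes down the ranking, the lower neighbours of `(v, vw)` are at most `d - 1` incidences
`(v, vu)`, all `Δ` incidences `(w, wu)`, and at most `d - 1` incidences `(u, uv)`; if it goes up,
at most `Δ - 1` incidences `(v, vu)` and `d` incidences `(u, uv)`, where `d ≥ 1` as `v` is a lower
neighbour of `w`. -/
theorem ncard_incGraph_lowerNeighborSet_le [Fintype V] {G : SimpleGraph V} {r : V → ℕ} {d : ℕ}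
    (hr : Function.Injective r) (hlow : ∀ v, (G.lowerNeighborSet r v).ncard ≤ d) (I : Inc G) :
    ((incGraph G).lowerNeighborSet (Inc.key r) I).ncard ≤ maxDeg G + 2 * d - 2 := by
  have hsub := Set.ncard_le_ncard (Inc.lowerNeighborSet_key_subset hr I)
  set v := I.1.1
  set w := I.other
  have hvw : G.Adj v w := I.adj
  have hunion := Set.ncard_union_le
    ({J : Inc G | J.1.1 = v ∧ r J.other < r w} ∪ {J | J.1.1 = w ∧ r w < r v})
    {J | J.other = v ∧ J.1.1 ∈ G.lowerNeighborSet r v \ {w}}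
  have hunion' := Set.ncard_union_le
    {J : Inc G | J.1.1 = v ∧ r J.other < r w} {J | J.1.1 = w ∧ r w < r v}
  have hv : {J : Inc G | J.1.1 = v ∧ r J.other < r w}.ncard ≤
      (G.neighborSet v ∩ {u | r u < r w}).ncard := Inc.ncard_setOf_fst_eq_le v {u | r u < r w}
  have hw : {J : Inc G | J.1.1 = w ∧ r w < r v}.ncard ≤
      (G.neighborSet w ∩ {_u | r w < r v}).ncard := Inc.ncard_setOf_fst_eq_le w {_u | r w < r v}
  have ho := Inc.ncard_setOf_other_eq_le (G := G) v (G.lowerNeighborSet r v \ {w})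
  rcases lt_or_gt_of_ne (hr.ne hvw.ne') with hwv | hvw'
  · have hlow_v :=
      Set.ncard_sdiff_singleton_add_one (show w ∈ G.lowerNeighborSet r v from ⟨hvw, hwv⟩)
    have hv_sub :
        (G.neighborSet v ∩ {u | r u < r w}).ncard ≤ (G.lowerNeighborSet r v \ {w}).ncard :=
      Set.ncard_le_ncard fun u ⟨hvu, huw⟩ => ⟨⟨hvu, huw.trans hwv⟩, fun h => huw.ne (congrArg r h)⟩
    have hw_deg := (Set.ncard_le_ncard (Set.inter_subset_left (s := G.neighborSet w)
      (t := {_u | r w < r v}))).trans (ncard_neighborSet_le_maxDeg G w)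
    have := hlow v
    omega
  · have hdeg_v := Set.ncard_sdiff_singleton_add_one (show w ∈ G.neighborSet v from hvw)
    have hv_sub : (G.neighborSet v ∩ {u | r u < r w}).ncard ≤ (G.neighborSet v \ {w}).ncard :=
      Set.ncard_le_ncard fun u ⟨hvu, huw⟩ => ⟨hvu, fun h => huw.ne (congrArg r h)⟩
    have hw_empty : G.neighborSet w ∩ {_u | r w < r v} = ∅ :=
      Set.eq_empty_of_forall_notMem fun _ hu => hu.2.not_gt hvw'
    have hlow_sub : (G.lowerNeighborSet r v \ {w}).ncard ≤ (G.lowerNeighborSet r v).ncard :=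
      Set.ncard_le_ncard Set.sdiff_subset
    have hd_pos : 0 < (G.lowerNeighborSet r w).ncard := (Set.ncard_pos).2 ⟨v, hvw.symm, hvw'⟩
    rw [hw_empty, Set.ncard_empty] at hw
    have := hlow v
    have := hlow w
    have := ncard_neighborSet_le_maxDeg G v
    omega

theorem incGraph_degen [Fintype V] {G : SimpleGraph V} {d : ℕ} (hG : Degen G d) :
    Degen (incGraph G) (maxDeg G + 2 * d - 2) :=
  let ⟨_, hr, hlow⟩ := hG.exists_rank
  .of_injective_rank (Inc.key_injective hr) (ncard_incGraph_lowerNeighborSet_le hr hlow)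

theorem incChoosable_of_degen [Fintype V] {G : SimpleGraph V} {d : ℕ} (hG : Degen G d) :
    IncChoosable G (maxDeg G + 2 * d - 1) := by
  intro L hL
  rcases isEmpty_or_nonempty (Inc G) with hE | ⟨⟨I⟩⟩
  · exact ⟨fun _ => 0, isEmptyElim, isEmptyElim⟩
  have hd := hG.one_le_of_adj I.adj
  refine (incGraph_degen hG).exists_listColoring L fun J => ?_
  rw [hL J]
  omega

theorem IncChoosable.incColorable {G : SimpleGraph V} {p : ℕ} (h : IncChoosable G p) :
    IncColorable G p := by
  obtain ⟨c, hcL, hc⟩ := h (fun _ => Finset.range p) (fun _ => Finset.card_range p)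
  exact ⟨.mk (fun J => ⟨c J, Finset.mem_range.mp (hcL J)⟩)
    fun hadj heq => hc _ _ hadj (congrArg Fin.val heq)⟩

theorem stmt10 [Fintype V] (G : SimpleGraph V) (d : ℕ) (hG : Degen G d) :
    incChromaticNumber G ≤ incChoiceNumber G ∧
    incChoiceNumber G ≤ maxDeg G + 2 * d - 1 := by
  have hch : IncChoosable G (maxDeg G + 2 * d - 1) := incChoosable_of_degen hG
  have hmin : IncChoosable G (incChoiceNumber G) :=
    Nat.sInf_mem (s := {k | IncChoosable G k}) ⟨_, hch⟩
  exact ⟨Nat.sInf_le hmin.incColorable, Nat.sInf_le hch⟩
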